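/- Let T, E₂, E₃ : ℝ² → ℝ³ be smooth (C^∞) maps of (t,x) that are orthonormal at every point with E₃ = T × E₂, and let u₂, u₃ : ℝ² → ℝ be smooth functions satisfying the parallel-frame Frenet equations ∂_x T = u₂ E₂ + u₃ E₃, ∂_x E₂ = -u₂ T, ∂_x E₃ = -u₃ T at every (t,x). Suppose the tangent vector evolves by the +2 flow ∂_t T = -(∂_x²u₂ + (1/2)(u₂² + u₃²)u₂) E₂ - (∂_x²u₃ + (1/2)(u₂² + u₃²)u₃) E₃. Then T satisfies the SO(3)-invariant mKdV spin model -∂_t T = ∂_x³ T + (3/2) ∂_x( |∂_x T|² T ). -/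

import Mathlib

/-!
Differentiating the parallel-frame equations expresses `T_xx` and `T_xxx` in the frame
`(T, E₂, E₃)` through `u` and its `x`-derivatives, and orthonormality of `E₂, E₃` gives
`|T_x|² = u₂² + u₃²`. In `T_xxx + (3/2)(|T_x|² T)_x` the `T`-components `∓ 3 (u₂u₂ₓ + u₃u₃ₓ)`
cancel, and the `Eⱼ`-components are `uⱼₓₓ + (1/2)|u|² uⱼ`, i.e. those of `-T_t`.
-/

noncomputable section

/-- Euclidean dot product on `ℝ³`. -/
def dot3 (a b : Fin 3 → ℝ) : ℝ := a 0 * b 0 + a 1 * b 1 + a 2 * b 2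

/-- Euclidean norm on `ℝ³`. -/
def norm3 (a : Fin 3 → ℝ) : ℝ := Real.sqrt (dot3 a a)

/-- Cross product on `ℝ³`. -/
def cross3 (a b : Fin 3 → ℝ) : Fin 3 → ℝ :=
  ![a 1 * b 2 - a 2 * b 1, a 2 * b 0 - a 0 * b 2, a 0 * b 1 - a 1 * b 0]

/-- Partial derivative with respect to the first variable `t`. -/
def pt {E : Type*} [NormedAddCommGroup E] [NormedSpace ℝ E]
    (f : ℝ × ℝ → E) : ℝ × ℝ → E := fun p => deriv (fun s => f (s, p.2)) p.1

/-- Partial derivative with respect to the second variable `x`. -/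
def px {E : Type*} [NormedAddCommGroup E] [NormedSpace ℝ E]
    (f : ℝ × ℝ → E) : ℝ × ℝ → E := fun p => deriv (fun s => f (p.1, s)) p.2

section PartialX

variable {E : Type*} [NormedAddCommGroup E] [NormedSpace ℝ E] {f g : ℝ × ℝ → E}

lemma Differentiable.comp_mk_left (hf : Differentiable ℝ f) (a : ℝ) :
    Differentiable ℝ (fun s => f (a, s)) :=
  hf.comp ((differentiable_const a).prodMk differentiable_id)

lemma px_eq_fderiv {p : ℝ × ℝ} (hf : DifferentiableAt ℝ f p) :
    px f p = fderiv ℝ f p (0, 1) :=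
  (hf.hasFDerivAt.comp_hasDerivAt p.2
    ((hasDerivAt_const p.2 p.1).prodMk (hasDerivAt_id p.2))).deriv

lemma contDiff_px {n : WithTop ℕ∞} (hf : ContDiff ℝ (n + 1) f) : ContDiff ℝ n (px f) := by
  have hpx : px f = fun p => fderiv ℝ f p (0, 1) :=
    funext fun p => px_eq_fderiv (hf.differentiable (by simp) p)
  rw [hpx]
  exact (hf.fderiv_right le_rfl).clm_apply contDiff_const

lemma px_add (hf : Differentiable ℝ f) (hg : Differentiable ℝ g) (p : ℝ × ℝ) :
    px (fun q => f q + g q) p = px f p + px g p :=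
  deriv_fun_add (hf.comp_mk_left p.1 p.2) (hg.comp_mk_left p.1 p.2)

lemma px_neg (p : ℝ × ℝ) : px (fun q => -f q) p = -px f p :=
  deriv.neg

lemma px_smul {c : ℝ × ℝ → ℝ} (hc : Differentiable ℝ c) (hf : Differentiable ℝ f)
    (p : ℝ × ℝ) : px (fun q => c q • f q) p = c p • px f p + px c p • f p :=
  deriv_fun_smul (hc.comp_mk_left p.1 p.2) (hf.comp_mk_left p.1 p.2)

lemma px_pow {a : ℝ × ℝ → ℝ} (ha : Differentiable ℝ a) (n : ℕ) (p : ℝ × ℝ) :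
    px (fun q => a q ^ n) p = n * a p ^ (n - 1) * px a p :=
  deriv_fun_pow (ha.comp_mk_left p.1 p.2) n

end PartialX

lemma norm3_sq_smul_add_smul {e f : Fin 3 → ℝ} (he : dot3 e e = 1) (hf : dot3 f f = 1)
    (hef : dot3 e f = 0) (a b : ℝ) : norm3 (a • e + b • f) ^ 2 = a ^ 2 + b ^ 2 := by
  have hdot : dot3 (a • e + b • f) (a • e + b • f) = a ^ 2 + b ^ 2 := by
    simp only [dot3, Pi.add_apply, Pi.smul_apply, smul_eq_mul] at *
    linear_combination a ^ 2 * he + b ^ 2 * hf + 2 * a * b * hef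
  rw [norm3, Real.sq_sqrt (hdot ▸ by positivity), hdot]

section ParallelFrame

variable {T E₂ E₃ : ℝ × ℝ → Fin 3 → ℝ} {u₂ u₃ : ℝ × ℝ → ℝ}

lemma px_px_of_parallelFrame (hE₂ : Differentiable ℝ E₂) (hE₃ : Differentiable ℝ E₃)
    (hu₂ : Differentiable ℝ u₂) (hu₃ : Differentiable ℝ u₃)
    (hTx : ∀ p, px T p = u₂ p • E₂ p + u₃ p • E₃ p)
    (hE₂x : ∀ p, px E₂ p = (-u₂ p) • T p) (hE₃x : ∀ p, px E₃ p = (-u₃ p) • T p)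
    (p : ℝ × ℝ) :
    px (px T) p = (-(u₂ p ^ 2 + u₃ p ^ 2)) • T p + px u₂ p • E₂ p + px u₃ p • E₃ p := by
  rw [funext hTx]
  simp (disch := fun_prop) only [px_add, px_smul, hE₂x, hE₃x]
  module

lemma px_px_px_of_parallelFrame (hT : Differentiable ℝ T) (hE₂ : Differentiable ℝ E₂)
    (hE₃ : Differentiable ℝ E₃) (hu₂ : ContDiff ℝ 2 u₂) (hu₃ : ContDiff ℝ 2 u₃)
    (hTx : ∀ p, px T p = u₂ p • E₂ p + u₃ p • E₃ p)
    (hE₂x : ∀ p, px E₂ p = (-u₂ p) • T p) (hE₃x : ∀ p, px E₃ p = (-u₃ p) • T p)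
    (p : ℝ × ℝ) :
    px (px (px T)) p
      = (-(3 * u₂ p * px u₂ p + 3 * u₃ p * px u₃ p)) • T p
        + (px (px u₂) p - (u₂ p ^ 2 + u₃ p ^ 2) * u₂ p) • E₂ p
        + (px (px u₃) p - (u₂ p ^ 2 + u₃ p ^ 2) * u₃ p) • E₃ p := by
  have hu₂' := hu₂.differentiable two_ne_zero
  have hu₃' := hu₃.differentiable two_ne_zero
  have hu₂x := (contDiff_px (n := 1) hu₂).differentiable one_ne_zero
  have hu₃x := (contDiff_px (n := 1) hu₃).differentiable one_ne_zero
  rw [funext (px_px_of_parallelFrame hE₂ hE₃ hu₂' hu₃' hTx hE₂x hE₃x)]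
  simp (disch := fun_prop) only [px_add, px_smul, px_neg, px_pow, Nat.cast_ofNat,
    Nat.reduceSub, pow_one, hTx, hE₂x, hE₃x]
  module

lemma px_norm3_px_sq_smul_of_parallelFrame (hT : Differentiable ℝ T)
    (hu₂ : Differentiable ℝ u₂) (hu₃ : Differentiable ℝ u₃)
    (h22 : ∀ p, dot3 (E₂ p) (E₂ p) = 1) (h33 : ∀ p, dot3 (E₃ p) (E₃ p) = 1)
    (h23 : ∀ p, dot3 (E₂ p) (E₃ p) = 0) (hTx : ∀ p, px T p = u₂ p • E₂ p + u₃ p • E₃ p)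
    (p : ℝ × ℝ) :
    px (fun q => norm3 (px T q) ^ 2 • T q) p
      = (u₂ p ^ 2 + u₃ p ^ 2) • (u₂ p • E₂ p + u₃ p • E₃ p)
        + (2 * u₂ p * px u₂ p + 2 * u₃ p * px u₃ p) • T p := by
  have hκ (q : ℝ × ℝ) : norm3 (px T q) ^ 2 = u₂ q ^ 2 + u₃ q ^ 2 :=
    hTx q ▸ norm3_sq_smul_add_smul (h22 q) (h33 q) (h23 q) _ _
  simp only [hκ]
  simp (disch := fun_prop) only [px_smul, px_add, px_pow, Nat.cast_ofNat,
    Nat.reduceSub, pow_one, hTx]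

end ParallelFrame

theorem plus_two_flow_mkdv_spin_model_general
    (T E₂ E₃ : ℝ × ℝ → Fin 3 → ℝ) (u₂ u₃ : ℝ × ℝ → ℝ)
    (hT : ContDiff ℝ (⊤ : ℕ∞) T) (hE₂ : ContDiff ℝ (⊤ : ℕ∞) E₂)
    (hE₃ : ContDiff ℝ (⊤ : ℕ∞) E₃)
    (hu₂ : ContDiff ℝ (⊤ : ℕ∞) u₂) (hu₃ : ContDiff ℝ (⊤ : ℕ∞) u₃)
    (horth22 : ∀ p, dot3 (E₂ p) (E₂ p) = 1)
    (horth33 : ∀ p, dot3 (E₃ p) (E₃ p) = 1)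
    (horth23 : ∀ p, dot3 (E₂ p) (E₃ p) = 0)
    (hTx : ∀ p, px T p = u₂ p • E₂ p + u₃ p • E₃ p)
    (hE₂x : ∀ p, px E₂ p = (-u₂ p) • T p)
    (hE₃x : ∀ p, px E₃ p = (-u₃ p) • T p)
    (hTt : ∀ p, pt T p
      = (-(px (px u₂) p + (1 / 2) * ((u₂ p) ^ 2 + (u₃ p) ^ 2) * u₂ p)) • E₂ p
        - (px (px u₃) p + (1 / 2) * ((u₂ p) ^ 2 + (u₃ p) ^ 2) * u₃ p) • E₃ p) :
    ∀ p, -pt T p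
      = px (px (px T)) p
        + (3 / 2 : ℝ) • px (fun q => (norm3 (px T q)) ^ 2 • T q) p := by
  intro p
  have h0 : ((⊤ : ℕ∞) : WithTop ℕ∞) ≠ 0 := by simp
  have h2 : (2 : WithTop ℕ∞) ≤ ((⊤ : ℕ∞) : WithTop ℕ∞) :=
    WithTop.coe_le_coe.2 le_top
  rw [hTt p,
    px_px_px_of_parallelFrame (hT.differentiable h0) (hE₂.differentiable h0)
      (hE₃.differentiable h0) (hu₂.of_le h2) (hu₃.of_le h2) hTx hE₂x hE₃x p,
    px_norm3_px_sq_smul_of_parallelFrame (hT.differentiable h0) (hu₂.differentiable h0)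
      (hu₃.differentiable h0) horth22 horth33 horth23 hTx p]
  module

/-- In a parallel frame, the +2 flow yields the SO(3)-invariant mKdV spin model
`-T_t = T_xxx + (3/2)(|T_x|² T)_x`. -/
theorem plus_two_flow_mkdv_spin_model
    (T E₂ E₃ : ℝ × ℝ → Fin 3 → ℝ) (u₂ u₃ : ℝ × ℝ → ℝ)
    (hT : ContDiff ℝ (⊤ : ℕ∞) T) (hE₂ : ContDiff ℝ (⊤ : ℕ∞) E₂)
    (hE₃ : ContDiff ℝ (⊤ : ℕ∞) E₃)
    (hu₂ : ContDiff ℝ (⊤ : ℕ∞) u₂) (hu₃ : ContDiff ℝ (⊤ : ℕ∞) u₃)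
    (horthTT : ∀ p, dot3 (T p) (T p) = 1)
    (horth22 : ∀ p, dot3 (E₂ p) (E₂ p) = 1)
    (horth33 : ∀ p, dot3 (E₃ p) (E₃ p) = 1)
    (horthT2 : ∀ p, dot3 (T p) (E₂ p) = 0)
    (horthT3 : ∀ p, dot3 (T p) (E₃ p) = 0)
    (horth23 : ∀ p, dot3 (E₂ p) (E₃ p) = 0)
    (hE₃def : ∀ p, E₃ p = cross3 (T p) (E₂ p))
    (hTx : ∀ p, px T p = u₂ p • E₂ p + u₃ p • E₃ p)
    (hE₂x : ∀ p, px E₂ p = (-u₂ p) • T p)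
    (hE₃x : ∀ p, px E₃ p = (-u₃ p) • T p)
    (hTt : ∀ p, pt T p
      = (-(px (px u₂) p + (1 / 2) * ((u₂ p) ^ 2 + (u₃ p) ^ 2) * u₂ p)) • E₂ p
        - (px (px u₃) p + (1 / 2) * ((u₂ p) ^ 2 + (u₃ p) ^ 2) * u₃ p) • E₃ p) :
    ∀ p, -pt T p
      = px (px (px T)) p
        + (3 / 2 : ℝ) • px (fun q => (norm3 (px T q)) ^ 2 • T q) p :=
  plus_two_flow_mkdv_spin_model_general T E₂ E₃ u₂ u₃ hT hE₂ hE₃ hu₂ hu₃ horth22 horth33 horth23 hTx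
    hE₂x hE₃x hTt
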